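/- arXiv:1804.01931 — 3 statements merged into one kernel-verified Lean document; each statement's English description precedes it below -/
import Mathlib

section
/- If the asynchronous graph of a Boolean network f : {0,1}^n → {0,1}^n is acyclic, then every n-path-universal word fixes f. -/
/-- One asynchronous update step: replace coordinate `i` of `x` by `f x i`. -/
def updateStep {n : ℕ} (f : (Fin n → Bool) → (Fin n → Bool)) (x : Fin n → Bool)
    (i : Fin n) : Fin n → Bool :=
  Function.update x i (f x i)

/-- Action of a word on a state. -/
def applyWord {n : ℕ} (f : (Fin n → Bool) → (Fin n → Bool)) :
    List (Fin n) → (Fin n → Bool) → (Fin n → Bool)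
  | [], x => x
  | i :: w, x => applyWord f w (updateStep f x i)

/-- A word `w` fixes `f` if applying it to any state yields a fixed point of `f`. -/
def Fixes {n : ℕ} (f : (Fin n → Bool) → (Fin n → Bool)) (w : List (Fin n)) : Prop :=
  ∀ x, f (applyWord f w x) = applyWord f w x

/-- Arc of the asynchronous graph. -/
def AsyncArc {n : ℕ} (f : (Fin n → Bool) → (Fin n → Bool))
    (x y : Fin n → Bool) : Prop :=
  ∃ i : Fin n, f x i ≠ x i ∧ y = Function.update x i (f x i)

/-- `w` is induced by a path of the `n`-cube. -/
def IsPathWord (n : ℕ) (w : List (Fin n)) : Prop :=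
  ∃ xs : List (Fin n → Bool), xs.Nodup ∧ xs.length = w.length + 1 ∧
    ∀ k (hk : k < w.length),
      xs.getD (k + 1) default =
        Function.update (xs.getD k default) (w.get ⟨k, hk⟩)
          (!(xs.getD k default (w.get ⟨k, hk⟩)))

/-- `W` contains every `n`-path-word as a subword. -/
def PathUniversal (n : ℕ) (W : List (Fin n)) : Prop :=
  ∀ w : List (Fin n), IsPathWord n w → w.Sublist W

/-!
Suppose `W` does not fix `f`: applied to some `x`, it ends in a state `y` with an unstable
coordinate `i`. Let `u` be the subword of the letters of `W` that actually change the state,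
so that `u ++ [i]` is a walk in `Γ(f)` from `x`. By acyclicity this walk visits distinct
states, so `u ++ [i]` is a path word and hence a subword of `W`. Embedding it into `W`
letter by letter gives a contradiction: a letter of `W` that leaves the current state
unchanged cannot host the next letter of `u ++ [i]`, which is unstable at that state, and
the letters of `W` that change the state are exactly those of `u`, so `i` has nowhere to go.
-/

theorem List.IsChain.nodup_of_acyclic {α : Type*} {r : α → α → Prop} {l : List α}
    (hl : l.IsChain r) (hr : ∀ a, ¬ Relation.TransGen r a a) : l.Nodup :=
  ((hl.imp fun _ _ => Relation.TransGen.single).pairwise).imp fun {a _} hab => by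
    rintro rfl
    exact hr a hab

section

variable {n : ℕ} (f : (Fin n → Bool) → (Fin n → Bool))

def effectiveWord : List (Fin n) → (Fin n → Bool) → List (Fin n)
  | [], _ => []
  | i :: W, x =>
    if f x i = x i then effectiveWord W x else i :: effectiveWord W (updateStep f x i)

def IsEffective : List (Fin n) → (Fin n → Bool) → Prop
  | [], _ => True
  | i :: u, x => f x i ≠ x i ∧ IsEffective u (updateStep f x i)

abbrev trajectory (u : List (Fin n)) (x : Fin n → Bool) : List (Fin n → Bool) :=
  u.scanl (updateStep f) x

variable {f}

theorem updateStep_eq_self {x : Fin n → Bool} {i : Fin n} (h : f x i = x i) :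
    updateStep f x i = x := by
  rw [updateStep, h, Function.update_eq_self]

theorem applyWord_effectiveWord (W : List (Fin n)) (x : Fin n → Bool) :
    applyWord f (effectiveWord f W x) x = applyWord f W x := by
  induction W generalizing x with
  | nil => rfl
  | cons i W ih =>
    by_cases h : f x i = x i
    · simp only [effectiveWord, if_pos h, applyWord, updateStep_eq_self h, ih]
    · simp only [effectiveWord, if_neg h, applyWord, ih]

theorem isEffective_effectiveWord (W : List (Fin n)) (x : Fin n → Bool) :
    IsEffective f (effectiveWord f W x) x := by
  induction W generalizing x with
  | nil => trivial
  | cons i W ih =>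
    by_cases h : f x i = x i
    · simpa only [effectiveWord, if_pos h] using ih x
    · simpa only [effectiveWord, if_neg h, IsEffective] using ⟨h, ih _⟩

theorem IsEffective.append_singleton {u : List (Fin n)} {x : Fin n → Bool} {i : Fin n}
    (hu : IsEffective f u x) (hi : f (applyWord f u x) i ≠ applyWord f u x i) :
    IsEffective f (u ++ [i]) x := by
  induction u generalizing x with
  | nil => exact ⟨hi, trivial⟩
  | cons j u ih => exact ⟨hu.1, ih hu.2 hi⟩

theorem IsEffective.getElem_ne {u : List (Fin n)} {x : Fin n → Bool} (hu : IsEffective f u x)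
    (k : ℕ) (hk : k < u.length) :
    f ((trajectory f u x)[k]'(by simp; omega)) u[k] ≠
      ((trajectory f u x)[k]'(by simp; omega)) u[k] := by
  induction u generalizing x k with
  | nil => simp at hk
  | cons i u ih =>
    cases k with
    | zero => simpa using hu.1
    | succ k => simpa [List.scanl_cons] using ih hu.2 k (by simpa using hk)

theorem IsEffective.isChain_trajectory {u : List (Fin n)} {x : Fin n → Bool}
    (hu : IsEffective f u x) : (trajectory f u x).IsChain (AsyncArc f) := by
  induction u generalizing x with
  | nil => simp
  | cons i u ih =>
    have hstep : AsyncArc f x (updateStep f x i) := ⟨i, hu.1, rfl⟩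
    cases u with
    | nil => simpa using hstep
    | cons j u =>
      have htail := ih hu.2
      simp only [trajectory, List.scanl_cons] at htail ⊢
      exact List.isChain_cons_cons.mpr ⟨hstep, htail⟩

theorem IsEffective.isPathWord {u : List (Fin n)} {x : Fin n → Bool} (hu : IsEffective f u x)
    (hnodup : (trajectory f u x).Nodup) : IsPathWord n u := by
  refine ⟨trajectory f u x, hnodup, List.length_scanl, fun k hk => ?_⟩
  have hk' : k + 1 < (trajectory f u x).length := by simpa using hk
  rw [List.getD_eq_getElem _ _ hk', List.getD_eq_getElem _ _ (by omega),
    List.getElem_succ_scanl, updateStep, Bool.eq_not_iff.mpr (hu.getElem_ne k hk)]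
  rfl

theorem stable_of_effectiveWord_append_sublist {W : List (Fin n)} {x : Fin n → Bool}
    {i : Fin n} (h : (effectiveWord f W x ++ [i]).Sublist W) :
    f (applyWord f W x) i = applyWord f W x i := by
  induction W generalizing x with
  | nil => simp at h
  | cons j W ih =>
    by_cases hj : f x j = x j
    · rw [effectiveWord, if_pos hj] at h
      rw [applyWord, updateStep_eq_self hj]
      rcases List.sublist_cons_iff.mp h with h | ⟨r, hr, h⟩
      · exact ih h
      · -- `j` hosts the first letter of `effectiveWord f W x ++ [i]`, which is unstable at `x`
        cases hu : effectiveWord f W x with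
        | nil =>
          rw [hu, List.nil_append, List.cons.injEq] at hr
          rw [← applyWord_effectiveWord, hu, applyWord, hr.1]
          exact hj
        | cons c t =>
          rw [hu, List.cons_append, List.cons.injEq] at hr
          have hc := (hu ▸ isEffective_effectiveWord W x : IsEffective f (c :: t) x).1
          exact absurd (hr.1 ▸ hj) hc
    · rw [effectiveWord, if_neg hj, List.cons_append] at h
      exact ih (List.cons_sublist_cons.mp h)

end

/-- if the asynchronous graph of `f` is acyclic, then every
`n`-path-universal word fixes `f`. -/
theorem pathUniversal_fixes_acyclic (n : ℕ) (f : (Fin n → Bool) → (Fin n → Bool))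
    (hacyc : ∀ x, ¬ Relation.TransGen (AsyncArc f) x x)
    (W : List (Fin n)) (hW : PathUniversal n W) :
    Fixes f W := by
  intro x
  by_contra hne
  obtain ⟨i, hi⟩ := Function.ne_iff.mp hne
  have hu : IsEffective f (effectiveWord f W x ++ [i]) x :=
    (isEffective_effectiveWord W x).append_singleton (by rwa [applyWord_effectiveWord])
  have hpath : IsPathWord n (effectiveWord f W x ++ [i]) :=
    hu.isPathWord (hu.isChain_trajectory.nodup_of_acyclic hacyc)
  exact hi (stable_of_effectiveWord_append_sublist (hW _ hpath))
end

section
/- There exists an n-component Boolean network f with acyclic asynchronous graph such that every word fixing f has length at least 2^n - 1; combined with the upper bound, the maximum fixing length over all asynchronous-acyclic n-component networks equals 2^n - 1. -/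
open Function Relation

theorem update_eq_of_eq_update_of_ne {α β : Type*} [DecidableEq α] {x y : α → β} {i j : α}
    {b : β} (hy : y = update x j b) (hi : y i ≠ x i) : update x i (y i) = y := by
  subst hy
  by_cases hij : i = j
  · subst hij
    simp
  · simp [update_of_ne hij] at hi

theorem wellFounded_of_forall_not_transGen_self {α : Type*} [Finite α] {r : α → α → Prop}
    (h : ∀ x, ¬ TransGen r x x) : WellFounded r :=
  haveI : IsTrans α (TransGen r) := ⟨fun _ _ _ => TransGen.trans⟩
  haveI : Std.Irrefl (TransGen r) := ⟨h⟩
  Subrelation.wf TransGen.single (Finite.wellFounded_of_trans_of_irrefl _)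

section AsyncDynamics

open Finset

variable {n : ℕ}

theorem updateStep_eq_or_asyncArc (f : (Fin n → Bool) → (Fin n → Bool)) (x : Fin n → Bool)
    (i : Fin n) : updateStep f x i = x ∨ AsyncArc f x (updateStep f x i) := by
  by_cases h : f x i = x i
  · left
    rw [updateStep, h, update_eq_self]
  · exact Or.inr ⟨i, h, rfl⟩

variable {f : (Fin n → Bool) → (Fin n → Bool)}

theorem applyWord_of_isFixedPt {x : Fin n → Bool} (hx : IsFixedPt f x) :
    ∀ w : List (Fin n), applyWord f w x = x
  | [] => rfl
  | i :: w => by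
    rw [applyWord, updateStep, show f x i = x i from congrFun hx i, update_eq_self]
    exact applyWord_of_isFixedPt hx w

theorem exists_word_fixing_of_closed (hacyc : ∀ x, ¬ TransGen (AsyncArc f) x x)
    (T : Finset (Fin n → Bool)) (hT : ∀ x ∈ T, ¬ IsFixedPt f x)
    (hclosed : ∀ x ∈ T, ∀ y, AsyncArc f x y → ¬ IsFixedPt f y → y ∈ T) :
    ∃ w : List (Fin n), w.length ≤ #T ∧ ∀ x ∈ T, IsFixedPt f (applyWord f w x) := by
  induction T using Finset.strongInduction with
  | H T ih =>
    rcases T.eq_empty_or_nonempty with rfl | hne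
    · exact ⟨[], by simp, by simp⟩
    obtain ⟨x₀, hx₀, hsource⟩ := (wellFounded_of_forall_not_transGen_self hacyc).has_min T hne
    obtain ⟨i, hi⟩ := ne_iff.mp (hT x₀ hx₀)
    have hstep : ∀ x ∈ T, updateStep f x i ∈ T.erase x₀ ∨ IsFixedPt f (updateStep f x i) := by
      intro x hx
      rcases updateStep_eq_or_asyncArc f x i with hstay | harc
      · rw [hstay]
        refine .inl (mem_erase.mpr ⟨?_, hx⟩)
        rintro rfl
        exact hi (by simpa [updateStep] using congrFun hstay i)
      · by_cases hfix : IsFixedPt f (updateStep f x i)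
        · exact .inr hfix
        · refine .inl (mem_erase.mpr ⟨?_, hclosed x hx _ harc hfix⟩)
          intro hx₀
          exact hsource x hx (hx₀ ▸ harc)
    obtain ⟨w, hw, hfix⟩ := ih (T.erase x₀) (erase_ssubset hx₀)
      (fun x hx => hT x (mem_of_mem_erase hx))
      (fun x hx y harc hy => mem_erase.mpr
        ⟨fun hyx₀ => hsource x (mem_of_mem_erase hx) (hyx₀ ▸ harc),
          hclosed x (mem_of_mem_erase hx) y harc hy⟩)
    refine ⟨i :: w, ?_, fun x hx => ?_⟩
    · rw [card_erase_of_mem hx₀] at hw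
      have := card_pos.mpr hne
      simp only [List.length_cons]
      omega
    · rcases hstep x hx with hmem | hfixed
      · exact hfix _ hmem
      · rwa [applyWord, applyWord_of_isFixedPt hfixed]

theorem exists_fixes_length_le_card (hacyc : ∀ x, ¬ TransGen (AsyncArc f) x x) :
    ∃ w : List (Fin n), w.length ≤ #{x | f x ≠ x} ∧ Fixes f w := by
  obtain ⟨w, hw, hfix⟩ := exists_word_fixing_of_closed hacyc
    {x | f x ≠ x} (fun x hx => (mem_filter.mp hx).2)
    (fun _ _ y _ hy => mem_filter.mpr ⟨mem_univ y, hy⟩)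
  refine ⟨w, hw, fun x => ?_⟩
  by_cases hx : IsFixedPt f x
  · rw [applyWord_of_isFixedPt hx, hx]
  · exact hfix x (mem_filter.mpr ⟨mem_univ x, hx⟩)

theorem exists_fixes_length_le_two_pow_sub_one (hacyc : ∀ x, ¬ TransGen (AsyncArc f) x x) :
    ∃ w : List (Fin n), w.length ≤ 2 ^ n - 1 ∧ Fixes f w := by
  obtain ⟨w, hw, hfix⟩ := exists_fixes_length_le_card hacyc
  refine ⟨w, hw.trans ?_, hfix⟩
  set y := applyWord f w default
  have hsub : ({x | f x ≠ x} : Finset _) ⊆ univ.erase y := fun x hx =>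
    mem_erase.mpr ⟨fun hxy => (mem_filter.mp hx).2 (hxy ▸ hfix default), mem_univ x⟩
  simpa [card_erase_of_mem] using card_le_card hsub

end AsyncDynamics

section PathNetwork

variable {n N : ℕ} {s : ℕ → Fin n → Bool}

open Classical in
noncomputable def pathNetwork (s : ℕ → Fin n → Bool) (N : ℕ) (x : Fin n → Bool) :
    Fin n → Bool :=
  if h : ∃ k, k + 1 < N ∧ s k = x then s (h.choose + 1) else x

theorem pathNetwork_apply_of_lt (hinj : Set.InjOn s (Set.Iio N)) {k : ℕ} (hk : k + 1 < N) :
    pathNetwork s N (s k) = s (k + 1) := by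
  have h : ∃ j, j + 1 < N ∧ s j = s k := ⟨k, hk, rfl⟩
  obtain ⟨hj, hjk⟩ := h.choose_spec
  rw [pathNetwork, dif_pos h, hinj (show h.choose < N by omega) (show k < N by omega) hjk]

variable (hinj : Set.InjOn s (Set.Iio N))
  (hadj : ∀ k, k + 1 < N → ∃ i, s (k + 1) = update (s k) i (!s k i))
include hinj hadj

theorem asyncArc_pathNetwork {x y : Fin n → Bool} (h : AsyncArc (pathNetwork s N) x y) :
    ∃ k, k + 1 < N ∧ x = s k ∧ y = s (k + 1) := by
  obtain ⟨i, hne, rfl⟩ := h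
  by_cases hx : ∃ k, k + 1 < N ∧ s k = x
  · obtain ⟨k, hk, rfl⟩ := hx
    rw [pathNetwork_apply_of_lt hinj hk] at hne ⊢
    obtain ⟨j, hj⟩ := hadj k hk
    exact ⟨k, hk, rfl, update_eq_of_eq_update_of_ne hj hne⟩
  · exact absurd (by rw [pathNetwork, dif_neg hx]) hne

theorem pathNetwork_acyclic (x : Fin n → Bool) : ¬ TransGen (AsyncArc (pathNetwork s N)) x x := by
  suffices ∀ {x y}, TransGen (AsyncArc (pathNetwork s N)) x y →
      ∃ k j, k < j ∧ j < N ∧ x = s k ∧ y = s j by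
    intro hx
    obtain ⟨k, j, hkj, hj, hxk, hxj⟩ := this hx
    exact hkj.ne (hinj (hkj.trans hj) hj (hxk.symm.trans hxj))
  intro x y h
  induction h with
  | single h =>
    obtain ⟨k, hk, rfl, rfl⟩ := asyncArc_pathNetwork hinj hadj h
    exact ⟨k, k + 1, k.lt_succ_self, hk, rfl, rfl⟩
  | tail _ h ih =>
    obtain ⟨k, j, hkj, hj, rfl, rfl⟩ := ih
    obtain ⟨m, hm, hjm, rfl⟩ := asyncArc_pathNetwork hinj hadj h
    obtain rfl : j = m := hinj hj (show m < N by omega) hjm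
    exact ⟨k, j + 1, by omega, hm, rfl, rfl⟩

theorem updateStep_pathNetwork {k : ℕ} (hk : k < N) (i : Fin n) :
    ∃ j < N, j ≤ k + 1 ∧ updateStep (pathNetwork s N) (s k) i = s j := by
  rcases updateStep_eq_or_asyncArc (pathNetwork s N) (s k) i with hstay | harc
  · exact ⟨k, hk, k.le_succ, hstay⟩
  · obtain ⟨m, hm, hkm, hstep⟩ := asyncArc_pathNetwork hinj hadj harc
    obtain rfl : k = m := hinj hk (show m < N by omega) hkm
    exact ⟨k + 1, hm, le_rfl, hstep⟩

theorem applyWord_pathNetwork (w : List (Fin n)) {k : ℕ} (hk : k < N) :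
    ∃ j < N, j ≤ k + w.length ∧ applyWord (pathNetwork s N) w (s k) = s j := by
  induction w generalizing k with
  | nil => exact ⟨k, hk, le_rfl, rfl⟩
  | cons i w ih =>
    obtain ⟨m, hm, hmk, hstep⟩ := updateStep_pathNetwork hinj hadj hk i
    obtain ⟨j, hj, hjm, happ⟩ := ih hm
    refine ⟨j, hj, ?_, by rw [applyWord, hstep, happ]⟩
    simp only [List.length_cons]
    omega

theorem le_length_of_fixes_pathNetwork {w : List (Fin n)} (hw : Fixes (pathNetwork s N) w) :
    N - 1 ≤ w.length := by
  by_contra! hlen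
  obtain ⟨j, hj, hjw, happ⟩ := applyWord_pathNetwork hinj hadj w (show 0 < N by omega)
  have hfix := hw (s 0)
  rw [happ, pathNetwork_apply_of_lt hinj (show j + 1 < N by omega)] at hfix
  exact absurd (hinj (show j + 1 < N by omega) hj hfix) j.succ_ne_self

end PathNetwork

section GrayCode

def gray (k : ℕ) : ℕ := k ^^^ k / 2

theorem gray_xor (a b : ℕ) : gray (a ^^^ b) = gray a ^^^ gray b := by
  simp only [gray, Nat.xor_div_two]
  ac_rfl

theorem gray_eq_zero_iff {k : ℕ} : gray k = 0 ↔ k = 0 := by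
  rw [gray, Nat.xor_eq_zero_iff]
  omega

theorem gray_injective : Injective gray := fun a b h => by
  rw [← Nat.xor_eq_zero_iff, ← gray_eq_zero_iff, gray_xor, h, Nat.xor_self]

theorem gray_lt_two_pow {k n : ℕ} (h : k < 2 ^ n) : gray k < 2 ^ n :=
  Nat.xor_lt_two_pow h ((Nat.div_le_self k 2).trans_lt h)

theorem succ_xor_self (k : ℕ) : ∃ t, (k + 1) ^^^ k = 2 ^ (t + 1) - 1 := by
  induction k using Nat.binaryRec with
  | zero => exact ⟨0, rfl⟩
  | bit b m ih =>
    cases b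
    · refine ⟨0, ?_⟩
      show Nat.bit true m ^^^ Nat.bit false m = 1
      rw [Nat.xor_bit, Nat.xor_self]
      rfl
    · obtain ⟨t, ht⟩ := ih
      refine ⟨t + 1, ?_⟩
      show Nat.bit false (m + 1) ^^^ Nat.bit true m = _
      rw [Nat.xor_bit, ht, Nat.bit_val, pow_succ 2 (t + 1)]
      have := Nat.one_le_two_pow (n := t + 1)
      change 2 * (2 ^ (t + 1) - 1) + 1 = _
      omega

theorem gray_two_pow_sub_one (t : ℕ) : gray (2 ^ (t + 1) - 1) = 2 ^ t := by
  apply Nat.eq_of_testBit_eq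
  intro i
  simp only [gray, Nat.testBit_xor, Nat.testBit_div_two, Nat.testBit_two_pow_sub_one,
    Nat.testBit_two_pow]
  grind

/-- Incrementing `k` flips a block of trailing bits `2 ^ (t + 1) - 1`, which `gray` maps to the
single bit `2 ^ t`. -/
theorem gray_succ (k : ℕ) : ∃ t, gray (k + 1) = gray k ^^^ 2 ^ t := by
  obtain ⟨t, ht⟩ := succ_xor_self k
  refine ⟨t, ?_⟩
  rw [← gray_two_pow_sub_one, ← ht, gray_xor, Nat.xor_comm (gray (k + 1)),
    Nat.xor_xor_cancel_left]

def grayState (n k : ℕ) : Fin n → Bool := fun i => (gray k).testBit i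

theorem grayState_injOn (n : ℕ) : Set.InjOn (grayState n) (Set.Iio (2 ^ n)) := by
  intro a ha b hb h
  apply gray_injective
  apply Nat.eq_of_testBit_eq
  intro i
  by_cases hi : i < n
  · exact congrFun h ⟨i, hi⟩
  · have hle : 2 ^ n ≤ 2 ^ i := Nat.pow_le_pow_right two_pos (by omega)
    rw [Nat.testBit_lt_two_pow ((gray_lt_two_pow ha).trans_le hle),
      Nat.testBit_lt_two_pow ((gray_lt_two_pow hb).trans_le hle)]

theorem grayState_succ {n k : ℕ} (hk : k + 1 < 2 ^ n) :
    ∃ i, grayState n (k + 1) = update (grayState n k) i (!grayState n k i) := by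
  obtain ⟨t, ht⟩ := gray_succ k
  have htn : t < n := by
    have : 2 ^ t < 2 ^ n := by
      rw [← Nat.xor_xor_cancel_left (gray k) (2 ^ t), ← ht]
      exact Nat.xor_lt_two_pow (gray_lt_two_pow (by omega)) (gray_lt_two_pow hk)
    exact (Nat.pow_lt_pow_iff_right (by norm_num)).mp this
  refine ⟨⟨t, htn⟩, funext fun i => ?_⟩
  by_cases hi : i = ⟨t, htn⟩
  · subst hi
    simp [grayState, ht, Nat.testBit_xor]
  · have : t ≠ i := fun h => hi (Fin.ext h.symm)
    simp [grayState, ht, Nat.testBit_xor, update_of_ne hi, this]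

end GrayCode

theorem max_fixing_length_acyclic_general (n : ℕ) :
    (∃ f : (Fin n → Bool) → (Fin n → Bool),
        (∀ x, ¬ Relation.TransGen (AsyncArc f) x x) ∧
        (∀ w : List (Fin n), Fixes f w → 2 ^ n - 1 ≤ w.length)) ∧
      (∀ f : (Fin n → Bool) → (Fin n → Bool),
        (∀ x, ¬ Relation.TransGen (AsyncArc f) x x) →
        ∃ w : List (Fin n), w.length ≤ 2 ^ n - 1 ∧ Fixes f w) :=
  ⟨⟨pathNetwork (grayState n) (2 ^ n),
      pathNetwork_acyclic (grayState_injOn n) (fun _ => grayState_succ),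
      fun _ => le_length_of_fixes_pathNetwork (grayState_injOn n) (fun _ => grayState_succ)⟩,
    fun _ => exists_fixes_length_le_two_pow_sub_one⟩

/-- some asynchronous-acyclic `n`-component network requires fixing words
of length at least `2^n - 1`, and every asynchronous-acyclic network is fixed by some
word of length at most `2^n - 1`; hence the maximum fixing length over the family is
exactly `2^n - 1`. -/
theorem max_fixing_length_acyclic (n : ℕ) (hn : 1 ≤ n) :
    (∃ f : (Fin n → Bool) → (Fin n → Bool),
        (∀ x, ¬ Relation.TransGen (AsyncArc f) x x) ∧
        (∀ w : List (Fin n), Fixes f w → 2 ^ n - 1 ≤ w.length)) ∧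
      (∀ f : (Fin n → Bool) → (Fin n → Bool),
        (∀ x, ¬ Relation.TransGen (AsyncArc f) x x) →
        ∃ w : List (Fin n), w.length ≤ 2 ^ n - 1 ∧ Fixes f w) :=
  max_fixing_length_acyclic_general n
end

section
/- Let G be a symmetric directed graph on [n] and f the conjunctive network on G. Let ω be any (n,2)-universal word. Then the word W := 1, 2, …, n, ω fixes f; consequently λ_CS(n) ≤ λ_2(n) + n. -/
/-- The digraph `E` is symmetric: arcs between distinct vertices come in pairs. -/
def SymDigraph {n : ℕ} (E : Fin n → Fin n → Bool) : Prop :=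
  ∀ i j : Fin n, i ≠ j → E i j = E j i

/-- The conjunctive network on the digraph `E`: `f_i(x)` is the conjunction of `x_j`
over the in-neighbors `j` of `i` (`1` if `i` has no in-neighbor). -/
def conjNet {n : ℕ} (E : Fin n → Fin n → Bool) (x : Fin n → Bool) (i : Fin n) : Bool :=
  decide (∀ j : Fin n, E j i = true → x j = true)

/-- A word over alphabet `[n]` is `(n,k)`-universal if it contains as subwords all
words of length `n - k` without repeated letters. -/
def NKUniversal (n k : ℕ) (W : List (Fin n)) : Prop :=
  ∀ u : List (Fin n), u.Nodup → u.length = n - k → u.Sublist W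

/-- `λ_k(n)`: the minimum length of an `(n,k)`-universal word. -/
noncomputable def lamK (n k : ℕ) : ℕ :=
  sInf {l : ℕ | ∃ W : List (Fin n), W.length = l ∧ NKUniversal n k W}

/-- `λ_CS(n)`: the fixing length of the family of conjunctive networks on symmetric
digraphs on `n` vertices. -/
noncomputable def lamCS (n : ℕ) : ℕ :=
  sInf {l : ℕ | ∃ W : List (Fin n), W.length = l ∧
    ∀ E : Fin n → Fin n → Bool, SymDigraph E → Fixes (conjNet E) W}

/-!
After the sweep `1, …, n`, every zero has a zero in-neighbour, and a zero with a neighbour other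
than itself has a zero neighbour other than itself. By symmetry the first property
(`f x ≤ x`) survives every further update, so from then on zeros are never undone. Let `Z` be the
zero set after the sweep and `T` its closure under arcs. Listing `T \ Z` in breadth-first order
from `Z` gives a repetition-free word along which the zeros spread to all of `T`; it has length
at most `n - #Z`, and it is empty when `#Z ≤ 1` (then `Z = T` by the second property), so it is
a subword of `ω`. Zeros never leave the
closed set `T`, so after `ω` the zero set is exactly `T`, and such a state is a fixed point.
-/

open Finset

theorem Bool.eq_false_of_le {a b : Bool} (h : a ≤ b) (hb : b = false) : a = false := by
  simpa [hb, Bool.le_iff_imp] using h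

variable {n : ℕ}

theorem applyWord_append (f : (Fin n → Bool) → Fin n → Bool) (u w : List (Fin n))
    (x : Fin n → Bool) : applyWord f (u ++ w) x = applyWord f w (applyWord f u x) := by
  induction u generalizing x with
  | nil => rfl
  | cons a u ih => exact ih _

def IsForwardClosed (E : Fin n → Fin n → Bool) (T : Finset (Fin n)) : Prop :=
  ∀ j ∈ T, ∀ i, E j i = true → i ∈ T

section Descending

variable {f : (Fin n → Bool) → Fin n → Bool}

theorem updateStep_le {x : Fin n → Bool} (hx : f x ≤ x) (v : Fin n) : updateStep f x v ≤ x :=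
  update_le_iff.2 ⟨hx v, fun _ _ => le_rfl⟩

theorem map_applyWord_le (hf : ∀ x v, f x ≤ x → f (updateStep f x v) ≤ updateStep f x v)
    {x : Fin n → Bool} (hx : f x ≤ x) (w : List (Fin n)) :
    f (applyWord f w x) ≤ applyWord f w x := by
  induction w generalizing x with
  | nil => exact hx
  | cons v w ih => exact ih (hf x v hx)

end Descending

section Conjunctive

variable {E : Fin n → Fin n → Bool}

theorem conjNet_eq_false_iff {x : Fin n → Bool} {i : Fin n} :
    conjNet E x i = false ↔ ∃ j, E j i = true ∧ x j = false := by
  simp [conjNet]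

theorem conjNet_eq_true_iff {x : Fin n → Bool} {i : Fin n} :
    conjNet E x i = true ↔ ∀ j, E j i = true → x j = true := by
  simp [conjNet]

theorem conjNet_mono (E : Fin n → Fin n → Bool) : Monotone (conjNet E) := by
  intro x y hxy i
  simp only [conjNet, Bool.le_iff_imp, decide_eq_true_eq]
  exact fun hx j hj => Bool.le_iff_imp.1 (hxy j) (hx j hj)

theorem conjNet_updateStep_le (hE : SymDigraph E) {x : Fin n → Bool} (hx : conjNet E x ≤ x)
    (v : Fin n) : conjNet E (updateStep (conjNet E) x v) ≤ updateStep (conjNet E) x v := by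
  intro i
  rcases eq_or_ne i v with rfl | hiv
  · simpa [updateStep] using conjNet_mono E (updateStep_le hx i) i
  · simp only [updateStep, Function.update_of_ne hiv]
    cases hxi : x i
    · obtain ⟨j, hji, hxj⟩ := conjNet_eq_false_iff.1 (Bool.eq_false_of_le (hx i) hxi)
      -- a zero in-neighbour `j = v` stays zero, since by symmetry `i` is an in-neighbour of `v`
      have hj : Function.update x v (conjNet E x v) j = false := by
        rcases eq_or_ne j v with rfl | hjv
        · simpa using conjNet_eq_false_iff.2 ⟨i, (hE i j hiv).trans hji, hxi⟩
        · simpa [Function.update_of_ne hjv] using hxj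
      simp [conjNet_eq_false_iff.2 ⟨j, hji, hj⟩]
    · exact le_top

theorem applyWord_zero_mem_of_isForwardClosed {T : Finset (Fin n)} (hT : IsForwardClosed E T)
    {x : Fin n → Bool} (hx : ∀ i, x i = false → i ∈ T) (w : List (Fin n)) :
    ∀ i, applyWord (conjNet E) w x i = false → i ∈ T := by
  induction w generalizing x with
  | nil => exact hx
  | cons v w ih =>
    refine ih fun i hi => ?_
    rcases eq_or_ne i v with rfl | hiv
    · obtain ⟨j, hji, hxj⟩ := conjNet_eq_false_iff.1 (by simpa [updateStep] using hi)
      exact hT j (hx j hxj) i hji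
    · exact hx i (by simpa [updateStep, Function.update_of_ne hiv] using hi)

theorem conjNet_eq_self_of_isForwardClosed {x : Fin n → Bool} (hx : conjNet E x ≤ x)
    (hZ : IsForwardClosed E (univ.filter (x · = false))) : conjNet E x = x := by
  funext i
  cases hxi : x i
  · exact Bool.eq_false_of_le (hx i) hxi
  · refine conjNet_eq_true_iff.2 fun j hji => ?_
    by_contra hxj
    simpa [hxi] using hZ j (by simpa using hxj) i hji

inductive SpreadChain (E : Fin n → Fin n → Bool) : Finset (Fin n) → List (Fin n) → Prop
  | nil (B : Finset (Fin n)) : SpreadChain E B []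
  | cons {B : Finset (Fin n)} {v : Fin n} {L : List (Fin n)} (hv : v ∉ B)
      (hadj : ∃ j ∈ B, E j v = true) (hL : SpreadChain E (insert v B) L) :
      SpreadChain E B (v :: L)

namespace SpreadChain

variable {B : Finset (Fin n)} {L : List (Fin n)}

theorem notMem (h : SpreadChain E B L) : ∀ a ∈ L, a ∉ B := by
  induction h with
  | nil => simp
  | cons hv _ _ ih =>
    rintro a (_ | ⟨_, ha⟩)
    · exact hv
    · exact fun haB => ih a ha (mem_insert_of_mem haB)

theorem nodup (h : SpreadChain E B L) : L.Nodup := by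
  induction h with
  | nil => exact List.nodup_nil
  | cons _ _ hL ih => exact List.nodup_cons.2 ⟨fun hv => hL.notMem _ hv (mem_insert_self _ _), ih⟩

theorem length_add_card_le (h : SpreadChain E B L) : L.length + #B ≤ n := by
  induction h with
  | nil B => simpa using card_le_univ B
  | cons hv _ _ ih => rw [card_insert_of_notMem hv] at ih; simpa [add_assoc, add_comm 1] using ih

theorem eq_nil_of_isForwardClosed (h : SpreadChain E B L) (hB : IsForwardClosed E B) : L = [] := by
  cases h with
  | nil => rfl
  | cons hv hadj _ => obtain ⟨j, hj, hjv⟩ := hadj; exact absurd (hB j hj _ hjv) hv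

theorem applyWord_eq_false (hE : SymDigraph E) (h : SpreadChain E B L) {w : List (Fin n)}
    (hw : L.Sublist w) {x : Fin n → Bool} (hx : conjNet E x ≤ x) (hB : ∀ i ∈ B, x i = false) :
    ∀ i ∈ B ∪ L.toFinset, applyWord (conjNet E) w x i = false := by
  induction hw generalizing B x with
  | slnil => simpa [applyWord] using hB
  | cons v _ ih =>
    exact ih h (conjNet_updateStep_le hE hx v)
      fun i hi => Bool.eq_false_of_le (updateStep_le hx v i) (hB i hi)
  | cons_cons v _ ih =>
    obtain _ | ⟨hv, ⟨j, hj, hjv⟩, hL⟩ := h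
    have hB' : ∀ i ∈ insert v B, updateStep (conjNet E) x v i = false := by
      rintro i hi
      rcases mem_insert.1 hi with rfl | hi
      · simpa [updateStep] using conjNet_eq_false_iff.2 ⟨j, hjv, hB j hj⟩
      · exact Bool.eq_false_of_le (updateStep_le hx v i) (hB i hi)
    have := ih hL (conjNet_updateStep_le hE hx v) hB'
    simpa [applyWord, List.toFinset_cons] using this

end SpreadChain

theorem exists_spreadChain_isForwardClosed (E : Fin n → Fin n → Bool) (B : Finset (Fin n)) :
    ∃ L, SpreadChain E B L ∧ IsForwardClosed E (B ∪ L.toFinset) := by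
  by_cases hB : IsForwardClosed E B
  · exact ⟨[], .nil B, by simpa using hB⟩
  · obtain ⟨j, hj, v, hjv, hv⟩ : ∃ j ∈ B, ∃ v, E j v = true ∧ v ∉ B := by
      simpa [IsForwardClosed] using hB
    obtain ⟨L, hL, hcl⟩ := exists_spreadChain_isForwardClosed E (insert v B)
    exact ⟨v :: L, .cons hv ⟨j, hj, hjv⟩ hL, by simpa [List.toFinset_cons] using hcl⟩
termination_by #Bᶜ
decreasing_by exact card_lt_card (compl_ssubset_compl.2 (ssubset_insert hv))

end Conjunctive

section Sweep

variable {E : Fin n → Fin n → Bool}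

/-- Holds for the state reached by updating each vertex of `S` once, in any order. -/
structure SweepInvariant (E : Fin n → Fin n → Bool) (S : Finset (Fin n)) (x : Fin n → Bool) :
    Prop where
  one_of_updated_one : ∀ k ∈ S, x k = true → ∀ j ∉ S, E j k = true → x j = true
  exists_zero_in_neighbor : ∀ i ∈ S, x i = false →
    ∃ j, E j i = true ∧ (j ∈ S → x j = false) ∧ (j = i → ∀ k, E k i = true → k = i)

theorem sweepInvariant_empty (x : Fin n → Bool) : SweepInvariant E ∅ x :=
  ⟨by simp, by simp⟩

theorem SweepInvariant.insert_updateStep (hE : SymDigraph E) {S : Finset (Fin n)}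
    {x : Fin n → Bool} (h : SweepInvariant E S x) {v : Fin n} (hv : v ∉ S) :
    SweepInvariant E (insert v S) (updateStep (conjNet E) x v) := by
  set x' := updateStep (conjNet E) x v
  have hx'v : x' v = conjNet E x v := Function.update_self ..
  have hx' : ∀ j ≠ v, x' j = x j := fun j hj => Function.update_of_ne hj ..
  constructor
  · intro k hk hk1 j hj hjk
    rw [mem_insert, not_or] at hj
    rw [hx' j hj.1]
    rcases mem_insert.1 hk with rfl | hk
    · exact conjNet_eq_true_iff.1 (hx'v ▸ hk1) j hjk
    · exact h.one_of_updated_one k hk (hx' k (ne_of_mem_of_not_mem hk hv) ▸ hk1) j hj.2 hjk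
  · intro i hi hi0
    rcases mem_insert.1 hi with rfl | hiS
    · obtain ⟨k, hki, hk0⟩ := conjNet_eq_false_iff.1 (hx'v ▸ hi0)
      rcases eq_or_ne k i with rfl | hki'
      · by_cases hiso : ∀ j, E j k = true → j = k
        · exact ⟨k, hki, fun _ => hi0, fun _ => hiso⟩
        · push Not at hiso
          obtain ⟨j, hjk, hjk'⟩ := hiso
          refine ⟨j, hjk, fun hj => ?_, fun h' => absurd h' hjk'⟩
          have hjS : j ∈ S := (mem_insert.1 hj).resolve_left hjk'
          rw [hx' j hjk']
          -- were `x j = 1`, the updated `j` would force its unupdated neighbour `k` to be 1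
          by_contra hj1
          have := h.one_of_updated_one j hjS (by simpa using hj1) k hv
            ((hE k j hjk'.symm).trans hjk)
          simp [this] at hk0
      · exact ⟨k, hki, fun _ => hx' k hki' ▸ hk0, fun h' => absurd h' hki'⟩
    · have hiv : i ≠ v := ne_of_mem_of_not_mem hiS hv
      obtain ⟨j, hji, hj0, hjiso⟩ := h.exists_zero_in_neighbor i hiS (hx' i hiv ▸ hi0)
      refine ⟨j, hji, fun hj => ?_, hjiso⟩
      rcases eq_or_ne j v with rfl | hjv
      · rw [hx'v]
        exact conjNet_eq_false_iff.2 ⟨i, (hE i j hiv).trans hji, hx' i hiv ▸ hi0⟩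
      · rw [hx' j hjv]
        exact hj0 ((mem_insert.1 hj).resolve_left hjv)

theorem SweepInvariant.union_applyWord (hE : SymDigraph E) {S : Finset (Fin n)}
    {x : Fin n → Bool} (h : SweepInvariant E S x) {l : List (Fin n)} (hl : l.Nodup)
    (hlS : ∀ a ∈ l, a ∉ S) :
    SweepInvariant E (S ∪ l.toFinset) (applyWord (conjNet E) l x) := by
  induction l generalizing S x with
  | nil => simpa [applyWord] using h
  | cons v l ih =>
    obtain ⟨hvl, hl⟩ := List.nodup_cons.1 hl
    have := ih (h.insert_updateStep hE (hlS v List.mem_cons_self)) hl fun a ha haS =>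
      (mem_insert.1 haS).elim (fun hav => hvl (hav ▸ ha)) (hlS a (List.mem_cons_of_mem v ha))
    simpa [applyWord, List.toFinset_cons] using this

theorem sweepInvariant_applyWord_finRange (hE : SymDigraph E) (x : Fin n → Bool) :
    SweepInvariant E univ (applyWord (conjNet E) (List.finRange n) x) := by
  simpa using (sweepInvariant_empty x).union_applyWord hE (List.nodup_finRange n) (by simp)

theorem SweepInvariant.conjNet_le {y : Fin n → Bool} (h : SweepInvariant E univ y) :
    conjNet E y ≤ y := by
  intro i
  cases hi : y i
  · obtain ⟨j, hji, hj0, -⟩ := h.exists_zero_in_neighbor i (mem_univ i) hi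
    simp [conjNet_eq_false_iff.2 ⟨j, hji, hj0 (mem_univ j)⟩]
  · exact le_top

theorem SweepInvariant.two_le_card_zeros (hE : SymDigraph E) {y : Fin n → Bool}
    (h : SweepInvariant E univ y) (hZ : ¬ IsForwardClosed E (univ.filter (y · = false))) :
    2 ≤ #(univ.filter (y · = false)) := by
  obtain ⟨j, hj0, i, hji, hi1⟩ : ∃ j, y j = false ∧ ∃ i, E j i = true ∧ y i = true := by
    simpa [IsForwardClosed] using hZ
  have hij : i ≠ j := by rintro rfl; simp [hj0] at hi1
  obtain ⟨k, -, hk0, hkiso⟩ := h.exists_zero_in_neighbor j (mem_univ j) hj0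
  have hkj' : k ≠ j := fun hk => hij (hkiso hk i ((hE i j hij).trans hji))
  exact one_lt_card.2 ⟨k, by simpa using hk0 (mem_univ k), j, by simpa using hj0, hkj'⟩

end Sweep

theorem NKUniversal.sublist_of_length_le {k : ℕ} {ω u : List (Fin n)} (hω : NKUniversal n k ω)
    (hu : u.Nodup) (hlen : u.length ≤ n - k) : u.Sublist ω := by
  set pad := ((univ \ u.toFinset).toList).take (n - k - u.length)
  have hpad : pad.length = n - k - u.length := by
    simp only [pad, List.length_take, length_toList, card_sdiff_of_subset (subset_univ _),
      card_univ, Fintype.card_fin, List.toFinset_card_of_nodup hu]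
    omega
  have hnodup : (u ++ pad).Nodup :=
    hu.append ((nodup_toList _).sublist (List.take_sublist ..)) fun a hau hapad => by
      simpa [hau] using List.mem_of_mem_take hapad
  exact (List.sublist_append_left u pad).trans (hω _ hnodup (by simp [hpad]; omega))

theorem sublist_flatten_replicate_finRange (u : List (Fin n)) :
    u.Sublist (List.replicate u.length (List.finRange n)).flatten := by
  induction u with
  | nil => exact List.nil_sublist _
  | cons a u ih => exact (List.singleton_sublist.2 (List.mem_finRange a)).append ih

theorem exists_nkUniversal (n k : ℕ) : ∃ ω : List (Fin n), NKUniversal n k ω :=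
  ⟨(List.replicate (n - k) (List.finRange n)).flatten, fun u _ hlen =>
    hlen ▸ sublist_flatten_replicate_finRange u⟩

theorem fixes_finRange_append {E : Fin n → Fin n → Bool} (hE : SymDigraph E)
    {ω : List (Fin n)} (hω : NKUniversal n 2 ω) : Fixes (conjNet E) (List.finRange n ++ ω) := by
  intro x
  rw [applyWord_append]
  set y := applyWord (conjNet E) (List.finRange n) x
  have hy : SweepInvariant E univ y := sweepInvariant_applyWord_finRange hE x
  have hy_le : conjNet E y ≤ y := hy.conjNet_le
  set Z := univ.filter (y · = false)
  obtain ⟨L, hL, hcl⟩ := exists_spreadChain_isForwardClosed E Z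
  have hlen : L.length ≤ n - 2 := by
    by_cases hZ : IsForwardClosed E Z
    · simp [hL.eq_nil_of_isForwardClosed hZ]
    · have : 2 ≤ #Z := hy.two_le_card_zeros hE hZ
      have := hL.length_add_card_le
      omega
  set z := applyWord (conjNet E) ω y
  have hz_zero : ∀ i ∈ Z ∪ L.toFinset, z i = false :=
    hL.applyWord_eq_false hE (hω.sublist_of_length_le hL.nodup hlen) hy_le (by simp [Z])
  have hz_mem : ∀ i, z i = false → i ∈ Z ∪ L.toFinset :=
    applyWord_zero_mem_of_isForwardClosed hcl
      (fun i hi => mem_union_left _ (by simpa [Z] using hi)) ω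
  have hzeros : univ.filter (z · = false) = Z ∪ L.toFinset := by
    ext i
    rw [mem_filter_univ]
    exact ⟨hz_mem i, hz_zero i⟩
  exact conjNet_eq_self_of_isForwardClosed
    (map_applyWord_le (fun _ v h => conjNet_updateStep_le hE h v) hy_le ω) (hzeros ▸ hcl)

/-- for every symmetric digraph `E` on `[n]` and every `(n,2)`-universal
word `ω`, the word `1, 2, …, n, ω` fixes the conjunctive network on `E`; consequently
`λ_CS(n) ≤ λ_2(n) + n`. -/
theorem symmetric_conjunctive_upper_bound (n : ℕ) :
    (∀ E : Fin n → Fin n → Bool, SymDigraph E →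
        ∀ ω : List (Fin n), NKUniversal n 2 ω →
          Fixes (conjNet E) (List.finRange n ++ ω)) ∧
      lamCS n ≤ lamK n 2 + n := by
  refine ⟨fun E hE ω hω => fixes_finRange_append hE hω, ?_⟩
  obtain ⟨ω, hωlen, hω⟩ : lamK n 2 ∈ {l | ∃ ω : List (Fin n), ω.length = l ∧ NKUniversal n 2 ω} :=
    Nat.sInf_mem <| (exists_nkUniversal n 2).elim fun ω hω => ⟨_, ω, rfl, hω⟩
  calc lamCS n ≤ (List.finRange n ++ ω).length :=
        Nat.sInf_le ⟨_, rfl, fun E hE => fixes_finRange_append hE hω⟩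
    _ = lamK n 2 + n := by simp [hωlen, add_comm]
end
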